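/- arXiv:1007.4614 — 5 statements merged into one kernel-verified Lean document; each statement's English description precedes it below -/
import Mathlib

section
/- Theorem 2.3, polynomial part: Let n ≥ 3 and let l, c be positive integers with l + c < n. Then the polynomial N_l^c(x,y) ∈ ℤ[x,y], viewed as a polynomial in y with coefficients in ℤ[x], is monic of degree (l + c)(n − l − c) in y. -/
/-!
Everything is read off from `y`-degrees.  For `b ≤ a` the Gaussian binomial `g_{a,b}(y)` is monic
of degree `b(a - b)`.  By descending induction on `(l, d)`, `τ_{l,d}` vanishes when `n + d < 2l`,
always has `y`-degree at most `(l - d)(n + d - l)`, and is monic of exactly that degree when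
`d < l` and `2l ≤ n + d`.  In the recursion for `τ_{l,d}` (with `m = 2l - d`) and in the sum
defining `N_l^c`, every summand falls short of the target degree by a product of two natural
numbers: `(u - l)(n + u - 2m)`, `(t - d) t` and `d (n + d - 2l - c)` respectively.  Hence exactly
one summand attains it, `u = max(l, 2m - n)`, resp. `d = max(0, 2l + c - n)`, and it is monic.
-/

open Polynomial in
/-- The Gaussian binomial polynomial
`g_{n,l}(x) = ∏_{i=0}^{l-1}(x^n − x^i) / ∏_{i=0}^{l-1}(x^l − x^i) ∈ ℤ[x]`
for `0 ≤ l ≤ n`, and `0` otherwise.  (The divisor is monic and the division is exact.) -/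
noncomputable def gP (n l : ℤ) : Polynomial ℤ :=
  if 0 ≤ l ∧ l ≤ n then
    (∏ i ∈ Finset.range l.toNat, ((X : Polynomial ℤ) ^ n.toNat - X ^ i)) /ₘ
      (∏ i ∈ Finset.range l.toNat, ((X : Polynomial ℤ) ^ l.toNat - X ^ i))
  else 0

/-- `g_{a,b}(x)`, viewed in `(ℤ[x])[y]` (a polynomial in the first variable `x`). -/
noncomputable def gX (a b : ℤ) : Polynomial (Polynomial ℤ) := Polynomial.C (gP a b)

/-- `g_{a,b}(y)`, viewed in `(ℤ[x])[y]` (a polynomial in the second variable `y`). -/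
noncomputable def gY (a b : ℤ) : Polynomial (Polynomial ℤ) := (gP a b).map Polynomial.C

/-- The polynomials `τ_{l,d}(x,y) ∈ ℤ[x,y]` (as elements of `(ℤ[x])[y]`), defined by
descending induction on `(l,d)` in the lexicographic order:  `τ_{l,d} = 0` if `l > n` or
`d > l`; `τ_{l,l} = g_{n,l}(x)` for `l ≤ n`; and for `d < l ≤ n`,
`τ_{l,d} = Σ_{u=l}^{2l−d} τ_{2l−d,u}·g_{u,l}(y) − Σ_{t=d+1}^{l} τ_{l,t}·g_{n−2l+t,t−d}(y)`. -/
noncomputable def tauP (n : ℕ) (l d : ℕ) : Polynomial (Polynomial ℤ) :=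
  if _h : n < l ∨ l < d then 0
  else if _hd : d = l then gX n l
  else
    (∑ u ∈ (Finset.Icc l (2 * l - d)).attach, tauP n (2 * l - d) u.1 * gY u.1 l) -
      ∑ t ∈ (Finset.Icc (d + 1) l).attach,
        tauP n l t.1 * gY ((n : ℤ) - 2 * l + t.1) ((t.1 : ℤ) - d)
  termination_by (n + 1 - l, l - d)
  decreasing_by
  · apply Prod.Lex.left
    omega
  · apply Prod.Lex.right'
    · omega
    · have := t.2
      rw [Finset.mem_Icc] at this
      omega

/-- `N_l^c(x,y) = Σ_{d=0}^{l} τ_{l,d}(x,y)·g_{n−2l+d}^{c}(y)` where `g_m^c = g_{m,m−c}`,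
as an element of `(ℤ[x])[y]`. -/
noncomputable def NP (n l c : ℕ) : Polynomial (Polynomial ℤ) :=
  ∑ d ∈ Finset.range (l + 1),
    tauP n l d * gY ((n : ℤ) - 2 * l + d) (((n : ℤ) - 2 * l + d) - c)

open Polynomial Finset

section LeadingTerm

variable {R ι : Type*} [Semiring R]

theorem Polynomial.degree_sum_lt {s : Finset ι} {f : ι → R[X]} {N : ℕ}
    (h : ∀ i ∈ s, (f i).degree < N) : (∑ i ∈ s, f i).degree < N :=
  (degree_sum_le s f).trans_lt ((Finset.sup_lt_iff (WithBot.bot_lt_coe N)).2 h)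

theorem Polynomial.degree_lt_of_natDegree_add_le {p : R[X]} {k N : ℕ}
    (h : p.natDegree + k ≤ N) (hk : 0 < k) : p.degree < N :=
  degree_le_natDegree.trans_lt (by exact_mod_cast (by omega : p.natDegree < N))

theorem Polynomial.Monic.add_of_degree_lt_natDegree [Nontrivial R] {p q : R[X]} {N : ℕ}
    (hp : p.Monic) (hpN : p.natDegree = N) (hq : q.degree < N) :
    (p + q).Monic ∧ (p + q).natDegree = N := by
  have hqp : q.degree < p.degree := by rwa [degree_eq_natDegree hp.ne_zero, hpN]
  exact ⟨hp.add_of_left hqp, (natDegree_add_eq_left_of_degree_lt hqp).trans hpN⟩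

theorem Polynomial.Monic.sum_of_degree_lt [Nontrivial R] {s : Finset ι} {f : ι → R[X]}
    {i₀ : ι} {N : ℕ} (hi₀ : i₀ ∈ s) (hmonic : (f i₀).Monic) (hdeg : (f i₀).natDegree = N)
    (hlt : ∀ i ∈ s, i ≠ i₀ → (f i).degree < N) :
    (∑ i ∈ s, f i).Monic ∧ (∑ i ∈ s, f i).natDegree = N := by
  classical
  rw [← add_sum_erase s f hi₀]
  exact hmonic.add_of_degree_lt_natDegree hdeg
    (degree_sum_lt fun i hi => hlt i (mem_of_mem_erase hi) (ne_of_mem_erase hi))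

end LeadingTerm

section GaussianBinomial

theorem monic_prod_X_pow_sub_X_pow {R : Type*} [CommRing R] [Nontrivial R] {a b : ℕ}
    (h : b ≤ a) : (∏ i ∈ range b, (X ^ a - X ^ i : R[X])).Monic :=
  monic_prod_of_monic _ _ fun i hi =>
    monic_X_pow_sub (by rw [degree_X_pow]; exact_mod_cast (mem_range.1 hi).trans_le h)

theorem natDegree_prod_X_pow_sub_X_pow {R : Type*} [CommRing R] [Nontrivial R] {a b : ℕ}
    (h : b ≤ a) : (∏ i ∈ range b, (X ^ a - X ^ i : R[X])).natDegree = b * a := by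
  rw [natDegree_prod_of_monic _ _ fun i hi =>
    monic_X_pow_sub (by rw [degree_X_pow]; exact_mod_cast (mem_range.1 hi).trans_le h)]
  rw [sum_congr rfl fun i hi => natDegree_sub_eq_left_of_natDegree_lt (by
    simpa using (mem_range.1 hi).trans_le h)]
  simp

theorem gP_eq_zero {a b : ℤ} (h : ¬(0 ≤ b ∧ b ≤ a)) : gP a b = 0 := by
  rw [gP, if_neg h]

theorem gP_natCast {a b : ℕ} (h : b ≤ a) :
    gP a b = (∏ i ∈ range b, (X ^ a - X ^ i : ℤ[X])) /ₘ ∏ i ∈ range b, (X ^ b - X ^ i) := by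
  rw [gP, if_pos ⟨by positivity, by exact_mod_cast h⟩]
  simp only [Int.toNat_natCast]

theorem monic_gP {a b : ℕ} (h : b ≤ a) : (gP a b).Monic := by
  rw [gP_natCast h, Monic, leadingCoeff_divByMonic_of_monic (monic_prod_X_pow_sub_X_pow le_rfl)]
  · exact monic_prod_X_pow_sub_X_pow h
  · rw [degree_eq_natDegree (monic_prod_X_pow_sub_X_pow le_rfl).ne_zero,
      degree_eq_natDegree (monic_prod_X_pow_sub_X_pow h).ne_zero,
      natDegree_prod_X_pow_sub_X_pow le_rfl, natDegree_prod_X_pow_sub_X_pow h]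
    exact_mod_cast Nat.mul_le_mul_left b h

theorem natDegree_gP {a b : ℕ} (h : b ≤ a) : (gP a b).natDegree = b * (a - b) := by
  rw [gP_natCast h, natDegree_divByMonic _ (monic_prod_X_pow_sub_X_pow le_rfl),
    natDegree_prod_X_pow_sub_X_pow le_rfl, natDegree_prod_X_pow_sub_X_pow h, Nat.mul_sub]

theorem gP_self (a : ℕ) : gP a a = 1 :=
  (monic_gP le_rfl).natDegree_eq_zero.1 (by simp [natDegree_gP])

theorem gX_self (a : ℕ) : gX a a = 1 := by
  rw [gX, gP_self, C_1]

theorem gY_eq_zero {a b : ℤ} (h : ¬(0 ≤ b ∧ b ≤ a)) : gY a b = 0 := by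
  rw [gY, gP_eq_zero h, Polynomial.map_zero]

theorem monic_gY {a b : ℕ} (h : b ≤ a) : (gY a b).Monic :=
  (monic_gP h).map _

theorem natDegree_gY {a b : ℕ} (h : b ≤ a) : (gY a b).natDegree = b * (a - b) := by
  rw [gY, (monic_gP h).natDegree_map, natDegree_gP h]

end GaussianBinomial

section Tau

variable {n : ℕ}

theorem tauP_self {l : ℕ} (h : l ≤ n) : tauP n l l = gX n l := by
  rw [tauP, dif_neg (by omega), dif_pos rfl]

theorem tauP_of_lt {l d : ℕ} (hdl : d < l) (hln : l ≤ n) :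
    tauP n l d = ∑ u ∈ Icc l (2 * l - d), tauP n (2 * l - d) u * gY u l -
      ∑ t ∈ Icc (d + 1) l, tauP n l t * gY ((n : ℤ) - 2 * l + t) ((t : ℤ) - d) := by
  rw [tauP, dif_neg (by omega), dif_neg (by omega),
    sum_attach _ fun u => tauP n (2 * l - d) u * gY u l,
    sum_attach _ fun t => tauP n l t * gY ((n : ℤ) - 2 * l + t) ((t : ℤ) - d)]

theorem tauP_eq_zero_of_lt {l d : ℕ} (h : n < l) : tauP n l d = 0 := by
  rw [tauP, dif_pos (Or.inl h)]

theorem tauP_eq_zero_of_add_lt {l d : ℕ} (h : n + d < 2 * l) : tauP n l d = 0 := by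
  rcases le_or_gt l d with hld | hdl
  · rw [tauP, dif_pos (by omega)]
  rcases lt_or_ge n l with hnl | hln
  · exact tauP_eq_zero_of_lt hnl
  rw [tauP_of_lt hdl hln,
    sum_eq_zero fun u _ => by rw [tauP_eq_zero_of_lt (by omega), zero_mul],
    sum_eq_zero fun t ht => ?_, sub_zero]
  rw [mem_Icc] at ht
  by_cases ht' : n + t < 2 * l
  · rw [tauP_eq_zero_of_add_lt ht', zero_mul]
  · rw [gY_eq_zero (by omega), mul_zero]
termination_by l - d
decreasing_by simp only [mem_Icc] at *; omega

theorem degree_identity_row {l d m u : ℕ} (hm : m + d = 2 * l) (hdl : d ≤ l)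
    (hlu : l ≤ u) (hum : u ≤ m) (h : 2 * m ≤ n + u) :
    (m - u) * (n + u - m) + l * (u - l) + (u - l) * (n + u - 2 * m) = (l - d) * (n + d - l) := by
  have hmz : (m : ℤ) = 2 * l - d := by omega
  zify [hum, hlu, h, hdl, (by omega : m ≤ n + u), (by omega : l ≤ n + d)]
  rw [hmz]
  ring

theorem natDegree_tauP_mul_gY_row_add_le {l d m u : ℕ} (hm : m + d = 2 * l) (hdl : d ≤ l)
    (hlu : l ≤ u) (hum : u ≤ m) (hτ : (tauP n m u).natDegree ≤ (m - u) * (n + u - m)) :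
    (tauP n m u * gY u l).natDegree + (u - l) * (n + u - 2 * m) ≤ (l - d) * (n + d - l) := by
  rcases lt_or_ge (n + u) (2 * m) with h | h
  · simp [tauP_eq_zero_of_add_lt h, Nat.sub_eq_zero_of_le h.le]
  rw [← degree_identity_row hm hdl hlu hum h]
  gcongr
  exact natDegree_mul_le.trans (add_le_add hτ (natDegree_gY hlu).le)

theorem natDegree_tauP_mul_gY_col_add_le {l d t : ℕ} (hd : 2 * l ≤ n + d) (hdt : d < t)
    (htl : t ≤ l) (hτ : (tauP n l t).natDegree ≤ (l - t) * (n + t - l)) :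
    (tauP n l t * gY ((n : ℤ) - 2 * l + t) ((t : ℤ) - d)).natDegree + (t - d) * t ≤
      (l - d) * (n + d - l) := by
  have hcast : (n : ℤ) - 2 * l + t = ((n + t - 2 * l : ℕ) : ℤ) := by omega
  rw [hcast, ← Nat.cast_sub hdt.le]
  calc _ ≤ (l - t) * (n + t - l) + (t - d) * (n + t - 2 * l - (t - d)) + (t - d) * t := by
        gcongr
        exact natDegree_mul_le.trans (add_le_add hτ (natDegree_gY (by omega)).le)
    _ = (l - d) * (n + d - l) := by
        zify [htl, hdt.le, hd, (by omega : l ≤ n + t), (by omega : 2 * l ≤ n + t),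
          (by omega : t - d ≤ n + t - 2 * l), (by omega : l ≤ n + d), (by omega : d ≤ l)]
        ring

theorem natDegree_tauP_le (n l d : ℕ) : (tauP n l d).natDegree ≤ (l - d) * (n + d - l) := by
  rcases lt_or_ge (n + d) (2 * l) with h | h
  · simp [tauP_eq_zero_of_add_lt h]
  rcases lt_trichotomy d l with hdl | rfl | hld
  · rw [tauP_of_lt hdl (by omega)]
    refine (natDegree_sub_le _ _).trans (max_le ?_ ?_) <;>
      refine natDegree_sum_le_of_forall_le _ _ fun i hi => ?_ <;> rw [mem_Icc] at hi
    · exact le_of_add_le_left (natDegree_tauP_mul_gY_row_add_le (by omega) hdl.le hi.1 hi.2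
        (natDegree_tauP_le n (2 * l - d) i))
    · exact le_of_add_le_left (natDegree_tauP_mul_gY_col_add_le h (by omega) hi.2
        (natDegree_tauP_le n l i))
  · simp [tauP_self (by omega : d ≤ n), gX]
  · rw [tauP, dif_pos (Or.inr hld), natDegree_zero]
    exact Nat.zero_le _
termination_by (n + 1 - l, l - d)
decreasing_by all_goals simp only [mem_Icc] at *; omega

theorem monic_tauP_mul_gY_row {l d m u₀ : ℕ} (hm : m + d = 2 * l) (hdl : d < l)
    (hd : 2 * l ≤ n + d) (hu₀ : u₀ = max l (2 * m - n))
    (ih : ∀ u, u < m → 2 * m ≤ n + u →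
      (tauP n m u).Monic ∧ (tauP n m u).natDegree = (m - u) * (n + u - m)) :
    (tauP n m u₀ * gY u₀ l).Monic ∧
      (tauP n m u₀ * gY u₀ l).natDegree = (l - d) * (n + d - l) := by
  have hlu₀ : l ≤ u₀ := by omega
  obtain ⟨hτ, hτdeg⟩ :
      (tauP n m u₀).Monic ∧ (tauP n m u₀).natDegree = (m - u₀) * (n + u₀ - m) := by
    rcases (show u₀ ≤ m by omega).lt_or_eq with hlt | heq
    · exact ih u₀ hlt (by omega)
    · -- `u₀ = m` forces `m = n`, and `τ_{n,n} = g_{n,n}(x) = 1`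
      obtain rfl : m = n := by omega
      rw [heq, tauP_self le_rfl, gX_self]
      simp
  refine ⟨hτ.mul (monic_gY hlu₀), ?_⟩
  rw [hτ.natDegree_mul (monic_gY hlu₀), hτdeg, natDegree_gY hlu₀,
    ← degree_identity_row hm hdl.le hlu₀ (by omega) (by omega),
    Nat.mul_eq_zero.2 (by omega : u₀ - l = 0 ∨ n + u₀ - 2 * m = 0), add_zero]

theorem degree_tauP_mul_gY_row_lt {l d m u : ℕ} (hm : m + d = 2 * l) (hdl : d ≤ l)
    (hu : u ∈ Icc l m) (hne : u ≠ max l (2 * m - n)) :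
    (tauP n m u * gY u l).degree < ↑((l - d) * (n + d - l)) := by
  rw [mem_Icc] at hu
  rcases lt_or_ge (n + u) (2 * m) with h | h
  · rw [tauP_eq_zero_of_add_lt h, zero_mul, degree_zero]
    exact WithBot.bot_lt_coe _
  exact degree_lt_of_natDegree_add_le (natDegree_tauP_mul_gY_row_add_le hm hdl hu.1 hu.2
    (natDegree_tauP_le n m u)) (Nat.mul_pos (by omega) (by omega))

theorem monic_and_natDegree_tauP {l d : ℕ} (hdl : d < l) (hd : 2 * l ≤ n + d) :
    (tauP n l d).Monic ∧ (tauP n l d).natDegree = (l - d) * (n + d - l) := by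
  have hm : 2 * l - d + d = 2 * l := by omega
  obtain ⟨hlead, hlead_deg⟩ := monic_tauP_mul_gY_row hm hdl hd rfl
    fun u hu h => monic_and_natDegree_tauP hu h
  have hrow := Monic.sum_of_degree_lt (f := fun u => tauP n (2 * l - d) u * gY u l)
    (mem_Icc.2 ⟨le_max_left _ _, by omega⟩) hlead hlead_deg
    fun u hu hne => degree_tauP_mul_gY_row_lt hm hdl.le hu hne
  rw [tauP_of_lt hdl (by omega), sub_eq_add_neg]
  refine hrow.1.add_of_degree_lt_natDegree hrow.2 ?_
  rw [degree_neg]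
  refine degree_sum_lt fun t ht => ?_
  rw [mem_Icc] at ht
  exact degree_lt_of_natDegree_add_le (natDegree_tauP_mul_gY_col_add_le hd ht.1 ht.2
    (natDegree_tauP_le n l t)) (Nat.mul_pos (by omega) (by omega))
termination_by (n + 1 - l, l - d)
decreasing_by all_goals omega

end Tau

section NP

variable {n l c : ℕ}

theorem degree_identity_NP {d : ℕ} (hdl : d ≤ l) (h : 2 * l + c ≤ n + d) :
    (l - d) * (n + d - l) + (n + d - 2 * l - c) * c + d * (n + d - 2 * l - c) =
      (l + c) * (n - l - c) := by
  zify [hdl, (by omega : l ≤ n + d), (by omega : 2 * l ≤ n + d),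
    (by omega : c ≤ n + d - 2 * l), (by omega : l ≤ n), (by omega : c ≤ n - l)]
  ring

theorem gY_NP_eq_natCast {d : ℕ} (h : 2 * l + c ≤ n + d) :
    gY ((n : ℤ) - 2 * l + d) ((n : ℤ) - 2 * l + d - c) =
      gY ↑(n + d - 2 * l) ↑(n + d - 2 * l - c) := by
  congr 1 <;> omega

theorem natDegree_tauP_mul_gY_NP_add_le {d : ℕ} (hdl : d ≤ l) :
    (tauP n l d * gY ((n : ℤ) - 2 * l + d) ((n : ℤ) - 2 * l + d - c)).natDegree +
      d * (n + d - 2 * l - c) ≤ (l + c) * (n - l - c) := by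
  rcases lt_or_ge (n + d) (2 * l + c) with h | h
  · rw [gY_eq_zero (by omega), show n + d - 2 * l - c = 0 by omega]
    simp
  rw [gY_NP_eq_natCast h, ← degree_identity_NP hdl h]
  gcongr
  refine natDegree_mul_le.trans (add_le_add (natDegree_tauP_le n l d) ?_)
  rw [natDegree_gY (by omega), Nat.sub_sub_self (by omega)]

theorem monic_tauP_mul_gY_NP {d₀ : ℕ} (hl : 0 < l) (hlc : l + c < n)
    (hd₀ : d₀ = 2 * l + c - n) :
    (tauP n l d₀ * gY ((n : ℤ) - 2 * l + d₀) ((n : ℤ) - 2 * l + d₀ - c)).Monic ∧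
      (tauP n l d₀ * gY ((n : ℤ) - 2 * l + d₀) ((n : ℤ) - 2 * l + d₀ - c)).natDegree =
        (l + c) * (n - l - c) := by
  have h : 2 * l + c ≤ n + d₀ := by omega
  obtain ⟨hτ, hτdeg⟩ := monic_and_natDegree_tauP (n := n) (by omega : d₀ < l) (by omega)
  have hg := monic_gY (a := n + d₀ - 2 * l) (b := n + d₀ - 2 * l - c) (by omega)
  rw [gY_NP_eq_natCast h]
  refine ⟨hτ.mul hg, ?_⟩
  rw [hτ.natDegree_mul hg, hτdeg, natDegree_gY (by omega), Nat.sub_sub_self (by omega),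
    ← degree_identity_NP (by omega : d₀ ≤ l) h,
    Nat.mul_eq_zero.2 (by omega : d₀ = 0 ∨ n + d₀ - 2 * l - c = 0), add_zero]

theorem degree_tauP_mul_gY_NP_lt {d : ℕ} (hd : d ∈ range (l + 1)) (hne : d ≠ 2 * l + c - n) :
    (tauP n l d * gY ((n : ℤ) - 2 * l + d) ((n : ℤ) - 2 * l + d - c)).degree <
      ↑((l + c) * (n - l - c)) := by
  rw [mem_range] at hd
  rcases lt_or_ge (n + d) (2 * l + c) with h | h
  · rw [gY_eq_zero (by omega), mul_zero, degree_zero]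
    exact WithBot.bot_lt_coe _
  exact degree_lt_of_natDegree_add_le (natDegree_tauP_mul_gY_NP_add_le (by omega))
    (Nat.mul_pos (by omega) (by omega))

end NP

theorem NP_monic_of_degree_general (n l c : ℕ) (hl : 0 < l)
    (hlc : l + c < n) :
    (NP n l c).Monic ∧ (NP n l c).natDegree = (l + c) * (n - l - c) := by
  obtain ⟨hlead, hlead_deg⟩ := monic_tauP_mul_gY_NP hl hlc rfl
  exact Monic.sum_of_degree_lt (mem_range.2 (by omega)) hlead hlead_deg
    fun _ hd hne => degree_tauP_mul_gY_NP_lt hd hne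

/-- **Theorem 2.3, polynomial part.**  For `n ≥ 3` and positive `l, c` with `l + c < n`,
the polynomial `N_l^c(x,y)`, viewed as a polynomial in `y` over `ℤ[x]`, is monic of
degree `(l + c)(n − l − c)`. -/
theorem NP_monic_of_degree (n l c : ℕ) (hn : 3 ≤ n) (hl : 0 < l) (hc : 0 < c)
    (hlc : l + c < n) :
    (NP n l c).Monic ∧ (NP n l c).natDegree = (l + c) * (n - l - c) :=
  NP_monic_of_degree_general n l c hl hlc
end

section
/- Duality of Frobenius-intersection counts (proof of Corollary 2.6): Let p be a prime, q = p^e with e ≥ 1, n ≥ 1, and ν a positive integer. For all nonnegative integers l ≤ n and d, the number of F_{q^ν}-subspaces L of F_{q^ν}^n with dim L = l and dim(L ∩ L^q) = d equals the number of F_{q^ν}-subspaces L′ of F_{q^ν}^n with dim L′ = n − l and dim(L′ ∩ L′^q) = n − 2l + d. Indeed, orthogonal complementation L ↦ L^⊥ with respect to the standard dot product on F_{q^ν}^n gives such a bijection, since (L^⊥)^q = (L^q)^⊥ and L^⊥ ∩ (L^⊥)^q = (L + L^q)^⊥. -/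
/-- The `p^e`-th power ring homomorphism (iterated Frobenius) on a field of characteristic `p`. -/
noncomputable def frobHom (F : Type*) [Field F] (p : ℕ) [Fact p.Prime] [CharP F p] (e : ℕ) :
    F →+* F where
  toFun x := x ^ p ^ e
  map_one' := one_pow _
  map_mul' x y := mul_pow x y _
  map_zero' := zero_pow (pow_ne_zero e (Fact.out : p.Prime).ne_zero)
  map_add' x y := add_pow_char_pow x y p e

instance (F : Type*) [Field F] [Finite F] (p : ℕ) [Fact p.Prime] [CharP F p] (e : ℕ) :
    RingHomSurjective (frobHom F p e) :=
  ⟨Finite.injective_iff_surjective.mp (frobHom F p e).injective⟩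

/-- The coordinatewise `p^e`-th power map on `Fin n → F`, as a semilinear map over `frobHom`. -/
noncomputable def frobLin (F : Type*) [Field F] (p : ℕ) [Fact p.Prime] [CharP F p] (e n : ℕ) :
    (Fin n → F) →ₛₗ[frobHom F p e] (Fin n → F) where
  toFun a := fun i => a i ^ p ^ e
  map_add' a b := funext fun i => add_pow_char_pow (a i) (b i) p e
  map_smul' c a := funext fun i => by
    simp [frobHom, mul_pow, Pi.smul_apply, smul_eq_mul]

/-- `L^q` for `q = p^e`: the image of the subspace `L ⊆ F^n` under the coordinatewise
`q`-th power (Frobenius) map; it is again an `F`-subspace. -/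
noncomputable def frobSub (F : Type*) [Field F] [Finite F] (p : ℕ) [Fact p.Prime] [CharP F p]
    (e n : ℕ) (L : Submodule F (Fin n → F)) : Submodule F (Fin n → F) :=
  L.map (frobLin F p e n)

/-! Orthogonal complementation for the dot product is an involution on subspaces of `F^n` that
sends dimension `l` to `n - l`. The Frobenius map multiplies dot products by a field
automorphism, so `(L^⊥)^q = (L^q)^⊥` and hence `L^⊥ ∩ (L^⊥)^q = (L + L^q)^⊥`, of dimension
`n - (2 dim L - dim (L ∩ L^q))`. -/

open Module

lemma Submodule.finrank_map_eq_of_injective {K V : Type*} [Field K] [AddCommGroup V] [Module K V]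
    {σ : K →+* K} [RingHomSurjective σ] {φ : V →ₛₗ[σ] V} (hφ : Function.Injective φ)
    (W : Submodule K V) : finrank K (W.map φ) = finrank K W := by
  let j : W ≃+ W.map φ := W.toAddSubgroup.equivMapOfInjective φ.toAddMonoidHom hφ
  have h := rank_eq_of_equiv_equiv σ j ⟨σ.injective, RingHomSurjective.is_surjective⟩
    fun r m => Subtype.ext (φ.map_smulₛₗ r (m : V))
  exact (congrArg Cardinal.toNat h).symm

namespace LinearMap.BilinForm

lemma orthogonal_sup {R M : Type*} [CommSemiring R] [AddCommMonoid M] [Module R M]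
    (B : LinearMap.BilinForm R M) (W W' : Submodule R M) :
    B.orthogonal (W ⊔ W') = B.orthogonal W ⊓ B.orthogonal W' := by
  refine le_antisymm (le_inf (orthogonal_le le_sup_left) (orthogonal_le le_sup_right)) ?_
  rintro x ⟨hW, hW'⟩ y hy
  obtain ⟨a, ha, b, hb, rfl⟩ := Submodule.mem_sup.mp hy
  rw [map_add, LinearMap.add_apply, hW a ha, hW' b hb, add_zero]

variable {K V : Type*} [Field K] [AddCommGroup V] [Module K V]
  {σ : K →+* K} [RingHomSurjective σ] {φ : V →ₛₗ[σ] V}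

lemma orthogonal_map_eq_map_orthogonal (B : LinearMap.BilinForm K V) (hφ : Function.Bijective φ)
    (hB : ∀ x y, B (φ x) (φ y) = σ (B x y)) (W : Submodule K V) :
    B.orthogonal (W.map φ) = (B.orthogonal W).map φ := by
  ext x
  obtain ⟨z, rfl⟩ := hφ.2 x
  simp only [mem_orthogonal_iff, Submodule.mem_map, forall_exists_index, and_imp,
    forall_apply_eq_imp_iff₂, hB, map_eq_zero, hφ.1.eq_iff, exists_eq_right]

variable [FiniteDimensional K V] {B : LinearMap.BilinForm K V}

lemma finrank_orthogonal_inf_map (hB : B.Nondegenerate) (hφ : Function.Bijective φ)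
    (hBφ : ∀ x y, B (φ x) (φ y) = σ (B x y)) (W : Submodule K V) :
    (finrank K ↥(B.orthogonal W ⊓ (B.orthogonal W).map φ) : ℤ) =
      finrank K V - 2 * finrank K W + finrank K ↥(W ⊓ W.map φ) := by
  rw [← orthogonal_map_eq_map_orthogonal B hφ hBφ, ← orthogonal_sup, finrank_orthogonal hB]
  have hsup := Submodule.finrank_sup_add_finrank_inf_eq W (W.map φ)
  rw [Submodule.finrank_map_eq_of_injective hφ.1] at hsup
  have hle := Submodule.finrank_le (W ⊔ W.map φ)
  omega

theorem card_finrank_inf_map_duality (hB : B.Nondegenerate) (hR : B.IsRefl)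
    (hφ : Function.Bijective φ) (hBφ : ∀ x y, B (φ x) (φ y) = σ (B x y)) {l : ℕ}
    (hl : l ≤ finrank K V) (d : ℕ) :
    Nat.card {W : Submodule K V // finrank K W = l ∧ finrank K ↥(W ⊓ W.map φ) = d} =
      Nat.card {W : Submodule K V // finrank K W = finrank K V - l ∧
        (finrank K ↥(W ⊓ W.map φ) : ℤ) = finrank K V - 2 * l + d} := by
  have hinv : Function.Involutive B.orthogonal := orthogonal_orthogonal hB hR
  refine Nat.card_congr (hinv.toPerm.subtypeEquiv fun W => ?_)
  rw [Function.Involutive.coe_toPerm, finrank_orthogonal_inf_map hB hφ hBφ,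
    finrank_orthogonal hB]
  have := Submodule.finrank_le W
  omega

end LinearMap.BilinForm

lemma dotProductBilin_isRefl (K ι : Type*) [CommRing K] [Fintype ι] :
    (dotProductBilin K K : LinearMap.BilinForm K (ι → K)).IsRefl := fun x y h => by
  rwa [dotProductBilin_apply_apply, dotProduct_comm] at h

lemma dotProductBilin_nondegenerate (K ι : Type*) [CommRing K] [Fintype ι] [DecidableEq ι] :
    (dotProductBilin K K : LinearMap.BilinForm K (ι → K)).Nondegenerate := by
  refine (dotProductBilin_isRefl K ι).nondegenerate_iff_separatingLeft.mpr fun x hx => ?_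
  funext i
  simpa using hx (Pi.single i 1)

section Frobenius

variable (F : Type*) [Field F] (p : ℕ) [Fact p.Prime] [CharP F p] (e n : ℕ)

lemma frobLin_injective : Function.Injective (frobLin F p e n) :=
  fun _ _ h => funext fun i => (frobHom F p e).injective (congrFun h i)

lemma frobLin_bijective [Finite F] : Function.Bijective (frobLin F p e n) :=
  Finite.injective_iff_bijective.mp (frobLin_injective F p e n)

lemma dotProduct_frobLin (a b : Fin n → F) :
    frobLin F p e n a ⬝ᵥ frobLin F p e n b = frobHom F p e (a ⬝ᵥ b) := by
  simp only [dotProduct, map_sum, map_mul]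
  rfl

end Frobenius

theorem frobenius_count_duality_general
    (p : ℕ) [Fact p.Prime] (e : ℕ) (n : ℕ) (l d : ℕ) (hl : l ≤ n)
    (F : Type) [Field F] [Fintype F] [CharP F p] :
    Nat.card {L : Submodule F (Fin n → F) //
        Module.finrank F ↥L = l ∧ Module.finrank F ↥(L ⊓ frobSub F p e n L) = d} =
      Nat.card {L : Submodule F (Fin n → F) //
        Module.finrank F ↥L = n - l ∧
        (Module.finrank F ↥(L ⊓ frobSub F p e n L) : ℤ) = (n : ℤ) - 2 * l + d} := by
  have hdim : finrank F (Fin n → F) = n := finrank_fin_fun F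
  have h := LinearMap.BilinForm.card_finrank_inf_map_duality
    (dotProductBilin_nondegenerate F (Fin n)) (dotProductBilin_isRefl F (Fin n))
    (frobLin_bijective F p e n) (dotProduct_frobLin F p e n) (hdim ▸ hl) d
  rwa [hdim] at h

/-- **Duality of Frobenius-intersection counts** (proof of Corollary 2.6).  For `q = p^e`,
`l ≤ n` and any `d`, the number of `F_{q^ν}`-subspaces `L ⊆ F_{q^ν}^n` with `dim L = l`
and `dim (L ∩ L^q) = d` equals the number of subspaces `L'` with `dim L' = n − l` and
`dim (L' ∩ L'^q) = n − 2l + d`. -/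
theorem frobenius_count_duality
    (p : ℕ) [Fact p.Prime] (e : ℕ) (he : 1 ≤ e) (n : ℕ) (hn : 1 ≤ n)
    (ν : ℕ) (hν : 0 < ν) (l d : ℕ) (hl : l ≤ n)
    (F : Type) [Field F] [Fintype F] [CharP F p] (hF : Fintype.card F = (p ^ e) ^ ν) :
    Nat.card {L : Submodule F (Fin n → F) //
        Module.finrank F ↥L = l ∧ Module.finrank F ↥(L ⊓ frobSub F p e n L) = d} =
      Nat.card {L : Submodule F (Fin n → F) //
        Module.finrank F ↥L = n - l ∧
        (Module.finrank F ↥(L ⊓ frobSub F p e n L) : ℤ) = (n : ℤ) - 2 * l + d} :=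
  frobenius_count_duality_general p e n l d hl F
end

section
/- Double-counting identity (equations 2.7 and 2.8): Let p be a prime, q = p^e with e ≥ 1, n ≥ 1, ν a positive integer, and let l, d be integers with 0 ≤ d ≤ l ≤ n. Write t_{l',d'} for the number of F_{q^ν}-subspaces L of F_{q^ν}^n with dim L = l′ and dim(L ∩ L^q) = d′. Then the number of pairs (L, M) of F_{q^ν}-subspaces of F_{q^ν}^n with dim L = l, dim M = 2l − d, and L + L^q ⊆ M is equal both to Σ_{t=d}^{l} t_{l,t} · g_{n−2l+t, t−d}(q^ν) and to Σ_{u=l}^{2l−d} t_{2l−d, u} · g_{u, l}(q^ν). -/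
/-!
Both sides count the pairs `(L, M)` fibred over one coordinate.  For fixed `L` with
`dim (L ∩ L^q) = t`, the space `L + L^q` has dimension `2l - t`, and the admissible `M` are
the `(2l - d)`-dimensional spaces containing it, i.e. the `(t - d)`-dimensional subspaces of the
quotient by `L + L^q`.  For fixed `M`, the condition `L + L^q ⊆ M` says `L ⊆ M ∩ φ⁻¹(M)` for the
Frobenius map `φ`; as `φ` is bijective this space has the dimension of `M ∩ M^q`.  The number of
`k`-dimensional subspaces of `𝔽_Q^m` is `g_{m,k}(Q)`: counting linearly independent `k`-tuples by
their span gives `g_{m,k}(Q) · ∏_{i<k} (Q^k - Q^i) = ∏_{i<k} (Q^m - Q^i)`, where the division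
defining `g_{m,k}` is exact by a `q`-Pascal recursion.  The terms with `t < d` or `u < l` vanish
because `g_{m,k} = 0` for `k < 0` and for `k > m`.
-/

open Polynomial Module Finset

section DoubleCounting

lemma natCast_card_eq_card_mul_of_card_fiber {α β R : Type*} [Finite α] [Finite β] [Semiring R]
    (f : α → β) {c : R} (h : ∀ b, (Nat.card {a // f a = b} : R) = c) :
    (Nat.card α : R) = Nat.card β * c := by
  have := Fintype.ofFinite β
  rw [← Nat.card_congr (Equiv.sigmaFiberEquiv f), Nat.card_sigma, Nat.cast_sum,
    sum_congr rfl fun b _ => h b, sum_const, card_univ, nsmul_eq_mul, Nat.card_eq_fintype_card]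

lemma sum_eq_sum_Icc_mul_card_fiber {ι : Type*} [Fintype ι] (g : ι → ℕ) (v : ℕ → ℤ) {a b : ℕ}
    (hg : ∀ i, g i ≤ b) (hv : ∀ t < a, v t = 0) :
    ∑ i, v (g i) = ∑ t ∈ Icc a b, (Nat.card {i // g i = t} : ℤ) * v t := by
  classical
  calc ∑ i, v (g i) = ∑ t ∈ range (b + 1), ∑ i with g i = t, v (g i) :=
        (sum_fiberwise_of_maps_to (fun i _ => mem_range.2 (Nat.lt_succ_of_le (hg i))) _).symm
    _ = ∑ t ∈ range (b + 1), (Nat.card {i // g i = t} : ℤ) * v t := by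
        refine sum_congr rfl fun t _ => ?_
        rw [sum_congr rfl fun i hi => by rw [(mem_filter.1 hi).2], sum_const, nsmul_eq_mul,
          Nat.card_eq_fintype_card, Fintype.card_subtype]
    _ = _ := by
        refine (sum_subset (fun t ht => ?_) fun t hb ht => ?_).symm
        · simp only [mem_Icc, mem_range] at ht ⊢; omega
        · simp only [mem_Icc, mem_range, not_and, not_le] at hb ht
          rw [hv t (by omega), mul_zero]

variable {α β : Type*} [Finite α] [Finite β] (P : α → Prop) (Q : β → Prop) (R : α → β → Prop)

theorem natCast_card_pairs_eq_sum_Icc_left (g : α → ℕ) (v : ℕ → ℤ) {a b : ℕ}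
    (hg : ∀ x, P x → g x ≤ b) (hv : ∀ t < a, v t = 0)
    (hR : ∀ x, P x → (Nat.card {y // Q y ∧ R x y} : ℤ) = v (g x)) :
    (Nat.card {xy : α × β // P xy.1 ∧ Q xy.2 ∧ R xy.1 xy.2} : ℤ) =
      ∑ t ∈ Icc a b, (Nat.card {x // P x ∧ g x = t} : ℤ) * v t := by
  have := Fintype.ofFinite {x // P x}
  let e : {xy : α × β // P xy.1 ∧ Q xy.2 ∧ R xy.1 xy.2} ≃ Σ x : {x // P x}, {y // Q y ∧ R x y} :=
    { toFun xy := ⟨⟨xy.1.1, xy.2.1⟩, xy.1.2, xy.2.2⟩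
      invFun xy := ⟨(xy.1, xy.2), xy.1.2, xy.2.2⟩
      left_inv _ := rfl
      right_inv _ := rfl }
  rw [Nat.card_congr e, Nat.card_sigma, Nat.cast_sum, sum_congr rfl fun x _ => hR x.1 x.2,
    sum_eq_sum_Icc_mul_card_fiber (fun x : {x // P x} => g x) v (fun x => hg x x.2) hv]
  refine sum_congr rfl fun t _ => ?_
  rw [Nat.card_congr (Equiv.subtypeSubtypeEquivSubtypeInter P (g · = t))]

theorem natCast_card_pairs_eq_sum_Icc_right (g : β → ℕ) (v : ℕ → ℤ) {a b : ℕ}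
    (hg : ∀ y, Q y → g y ≤ b) (hv : ∀ t < a, v t = 0)
    (hR : ∀ y, Q y → (Nat.card {x // P x ∧ R x y} : ℤ) = v (g y)) :
    (Nat.card {xy : α × β // P xy.1 ∧ Q xy.2 ∧ R xy.1 xy.2} : ℤ) =
      ∑ t ∈ Icc a b, (Nat.card {y // Q y ∧ g y = t} : ℤ) * v t := by
  rw [← natCast_card_pairs_eq_sum_Icc_left Q P (fun y x => R x y) g v hg hv hR]
  exact congrArg _ (Nat.card_congr ((Equiv.prodComm α β).subtypeEquiv fun _ => and_left_comm))

end DoubleCounting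

/-- Evaluated at `q`, this counts the linearly independent `k`-tuples in `𝔽_q^n`. -/
noncomputable def linIndepPoly (n k : ℕ) : ℤ[X] :=
  ∏ i ∈ range k, (X ^ n - X ^ i)

@[simp] lemma linIndepPoly_zero_right (n : ℕ) : linIndepPoly n 0 = 1 := prod_range_zero _

lemma linIndepPoly_succ_right (n k : ℕ) :
    linIndepPoly n (k + 1) = linIndepPoly n k * (X ^ n - X ^ k) :=
  prod_range_succ _ _

lemma linIndepPoly_succ_succ (n k : ℕ) :
    linIndepPoly (n + 1) (k + 1) = (X ^ (n + 1) - 1) * X ^ k * linIndepPoly n k := by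
  have h : ∀ i ∈ range k, (X ^ (n + 1) - X ^ (i + 1) : ℤ[X]) = X * (X ^ n - X ^ i) :=
    fun i _ => by ring
  rw [linIndepPoly, prod_range_succ', prod_congr rfl h, prod_mul_distrib, prod_const, card_range,
    linIndepPoly]
  ring

lemma linIndepPoly_dvd : ∀ {n k : ℕ}, k ≤ n → linIndepPoly k k ∣ linIndepPoly n k
  | _, 0, _ => by simp
  | 0, _ + 1, h => absurd h (by omega)
  | n + 1, k + 1, h => by
    obtain ⟨a, ha⟩ : linIndepPoly k k ∣ linIndepPoly n k := linIndepPoly_dvd (by omega)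
    obtain ⟨b, hb⟩ : linIndepPoly (k + 1) (k + 1) ∣ linIndepPoly n (k + 1) := by
      rcases (by omega : k + 1 ≤ n ∨ k = n) with hk | rfl
      · exact linIndepPoly_dvd hk
      · rw [linIndepPoly_succ_right k k, sub_self, mul_zero]; exact dvd_zero _
    -- q-Pascal rule: `X^k (X^(n+1) - 1) = X^k (X^(k+1) - 1) + X^(k+1) (X^n - X^k)`
    refine ⟨a + X ^ (k + 1) * b, ?_⟩
    rw [linIndepPoly_succ_succ]
    linear_combination X ^ (k + 1) * hb - X ^ (k + 1) * linIndepPoly_succ_right n k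
      - a * linIndepPoly_succ_succ k k + X ^ k * (X ^ (k + 1) - 1) * ha

lemma linIndepPoly_monic (k : ℕ) : (linIndepPoly k k).Monic :=
  monic_prod_of_monic _ _ fun i hi =>
    monic_X_pow_sub (by simpa using (WithBot.coe_lt_coe.mpr (mem_range.mp hi)))

lemma gP_natCast_mul {n k : ℕ} (h : k ≤ n) : gP n k * linIndepPoly k k = linIndepPoly n k := by
  obtain ⟨g, hg⟩ := linIndepPoly_dvd h
  have hg' : gP n k = g := by
    rw [gP, if_pos (by omega), Int.toNat_natCast, Int.toNat_natCast]
    exact (congrArg (· /ₘ _) hg).trans (mul_divByMonic_cancel_left g (linIndepPoly_monic k))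
  rw [hg', hg, mul_comm]

lemma gP_eq_zero_s9 {n k : ℤ} (h : k < 0 ∨ n < k) : gP n k = 0 :=
  if_neg (by omega)

lemma finrank_comap_mkQ {K V : Type*} [DivisionRing K] [AddCommGroup V] [Module K V]
    [FiniteDimensional K V] (U : Submodule K V) (W : Submodule K (V ⧸ U)) :
    finrank K (W.comap U.mkQ) = finrank K W + finrank K U := by
  have h := (U.mkQ.domRestrict (W.comap U.mkQ)).finrank_range_add_finrank_ker
  rw [LinearMap.range_domRestrict, Submodule.map_comap_eq_of_surjective U.mkQ_surjective,
    LinearMap.ker_domRestrict, Submodule.ker_mkQ,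
    (Submodule.comapSubtypeEquivOfLe (Submodule.le_comap_mkQ U W)).finrank_eq] at h
  exact h.symm

section Counting

variable {F V : Type*} [Field F] [Fintype F] [AddCommGroup V] [Module F V] [Finite V]

lemma natCast_card_linearIndependent {k : ℕ} (hk : k ≤ finrank F V) :
    (Nat.card {s : Fin k → V // LinearIndependent F s} : ℤ) =
      (linIndepPoly (finrank F V) k).eval (Fintype.card F : ℤ) := by
  rw [card_linearIndependent hk, Nat.cast_prod, Fin.prod_univ_eq_prod_range
    (fun i => ((Fintype.card F ^ finrank F V - Fintype.card F ^ i : ℕ) : ℤ)), linIndepPoly,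
    eval_prod]
  refine prod_congr rfl fun i hi => ?_
  rw [Nat.cast_sub (Nat.pow_le_pow_right Fintype.card_pos (by have := mem_range.1 hi; omega))]
  simp

noncomputable def linearIndependentSpanEquiv {k : ℕ} (W : Submodule F V) (hW : finrank F W = k) :
    {s : {s : Fin k → V // LinearIndependent F s} // Submodule.span F (Set.range s.1) = W} ≃
      {t : Fin k → W // LinearIndependent F t} where
  toFun s := ⟨fun i => ⟨s.1.1 i, s.2.le (Submodule.subset_span (Set.mem_range_self i))⟩,
    LinearIndependent.of_comp W.subtype s.1.2⟩
  invFun t := ⟨⟨W.subtype ∘ t.1, t.2.map' _ W.ker_subtype⟩, by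
    rw [Set.range_comp, ← Submodule.map_span,
      t.2.span_eq_top_of_card_eq_finrank' (by rw [Fintype.card_fin, hW]),
      Submodule.map_subtype_top]⟩
  left_inv s := rfl
  right_inv t := rfl

lemma natCast_card_finrank_eq (k : ℕ) :
    (Nat.card {W : Submodule F V // finrank F W = k} : ℤ) =
      (gP (finrank F V) k).eval (Fintype.card F : ℤ) := by
  rcases le_or_gt k (finrank F V) with hk | hk
  · let span : {s : Fin k → V // LinearIndependent F s} → {W : Submodule F V // finrank F W = k} :=
      fun s => ⟨_, (finrank_span_eq_card s.2).trans (Fintype.card_fin k)⟩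
    have hcount := natCast_card_eq_card_mul_of_card_fiber span fun W => by
      rw [Nat.card_congr ((Equiv.subtypeEquivRight fun s => Subtype.ext_iff).trans
        (linearIndependentSpanEquiv W.1 W.2)), natCast_card_linearIndependent W.2.ge, W.2]
    have hne : (linIndepPoly k k).eval (Fintype.card F : ℤ) ≠ 0 := by
      simp only [linIndepPoly, eval_prod, eval_sub, eval_pow, eval_X, prod_ne_zero_iff, mem_range]
      exact fun i hi => sub_ne_zero.mpr (pow_right_injective₀ (by exact_mod_cast Fintype.card_pos)
        (by exact_mod_cast Fintype.one_lt_card.ne') |>.ne hi.ne')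
    apply mul_right_cancel₀ hne
    rw [← hcount, natCast_card_linearIndependent hk, ← eval_mul, gP_natCast_mul hk]
  · rw [gP_eq_zero_s9 (Or.inr (by exact_mod_cast hk)), eval_zero, Nat.cast_eq_zero,
      Nat.card_eq_zero]
    exact .inl ⟨fun W => (W.2 ▸ Submodule.finrank_le W.1).not_gt hk⟩

lemma natCast_card_finrank_eq_and_ge (m : ℕ) (U : Submodule F V) :
    (Nat.card {M : Submodule F V // finrank F M = m ∧ U ≤ M} : ℤ) =
      (gP (finrank F V - finrank F U) (m - finrank F U)).eval (Fintype.card F : ℤ) := by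
  rcases le_or_gt (finrank F U) m with hUm | hUm
  · have e : {W : Submodule F (V ⧸ U) // finrank F W = m - finrank F U} ≃
        {M : Submodule F V // finrank F M = m ∧ U ≤ M} :=
      ((Submodule.comapMkQRelIso U).toEquiv.subtypeEquiv (q := fun M => finrank F M.1 = m)
        fun W => by change _ ↔ finrank F (W.comap U.mkQ) = m; rw [finrank_comap_mkQ]; omega).trans
      ((Equiv.subtypeSubtypeEquivSubtypeInter (· ∈ Set.Ici U) (finrank F · = m)).trans
        (Equiv.subtypeEquivRight fun _ => and_comm))
    have : Finite (V ⧸ U) := Finite.of_surjective _ U.mkQ_surjective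
    rw [← Nat.card_congr e, natCast_card_finrank_eq, ← U.finrank_quotient_add_finrank]
    push_cast [Nat.cast_sub hUm]
    ring_nf
  · rw [gP_eq_zero_s9 (.inl (by omega)), eval_zero, Nat.cast_eq_zero, Nat.card_eq_zero]
    exact .inl ⟨fun M => by have := Submodule.finrank_mono M.2.2; omega⟩

lemma natCast_card_finrank_eq_and_le (l : ℕ) (W : Submodule F V) :
    (Nat.card {L : Submodule F V // finrank F L = l ∧ L ≤ W} : ℤ) =
      (gP (finrank F W) l).eval (Fintype.card F : ℤ) := by
  have e : {L : Submodule F W // finrank F L = l} ≃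
      {L : Submodule F V // finrank F L = l ∧ L ≤ W} :=
    ((Submodule.MapSubtype.orderIso W).toEquiv.subtypeEquiv (q := fun L => finrank F L.1 = l)
      fun L => by
        change _ ↔ finrank F (L.map W.subtype) = l; rw [Submodule.finrank_map_subtype_eq]).trans
    ((Equiv.subtypeSubtypeEquivSubtypeInter (· ≤ W) (finrank F · = l)).trans
      (Equiv.subtypeEquivRight fun _ => and_comm))
  rw [← Nat.card_congr e, natCast_card_finrank_eq]

end Counting

section Semilinear

variable {F V : Type*} [Field F] [Fintype F] [AddCommGroup V] [Module F V] [Finite V]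
  {σ : F →+* F} [RingHomSurjective σ] {φ : V →ₛₗ[σ] V}

lemma finrank_map_of_injective (hφ : Function.Injective φ) (L : Submodule F V) :
    finrank F (L.map φ) = finrank F L := by
  have hcard : Nat.card (L.map φ) = Nat.card L := by
    rw [← SetLike.coe_sort_coe, Submodule.map_coe, Nat.card_image_of_injective hφ]
    rfl
  rw [natCard_eq_pow_finrank (K := F) (V := L.map φ), natCard_eq_pow_finrank (K := F) (V := L)]
    at hcard
  exact Nat.pow_right_injective Finite.one_lt_card hcard

lemma finrank_inf_comap_eq_inf_map (hφ : Function.Injective φ) (M : Submodule F V) :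
    finrank F (M ⊓ M.comap φ : Submodule F V) = finrank F (M ⊓ M.map φ : Submodule F V) := by
  rw [← finrank_map_of_injective hφ, Submodule.map_inf _ hφ,
    Submodule.map_comap_eq_of_surjective (Finite.injective_iff_surjective.mp hφ), inf_comm]

theorem natCast_card_pairs_sup_map_le_eq_sum_left (hφ : Function.Injective φ) (l m : ℕ) :
    (Nat.card {LM : Submodule F V × Submodule F V //
        finrank F LM.1 = l ∧ finrank F LM.2 = m ∧ LM.1 ⊔ LM.1.map φ ≤ LM.2} : ℤ) =
      ∑ t ∈ Icc (2 * l - m) l,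
        (Nat.card {L : Submodule F V // finrank F L = l ∧ finrank F ↥(L ⊓ L.map φ) = t} : ℤ) *
          (gP ((finrank F V : ℤ) - 2 * l + t) ((m : ℤ) - 2 * l + t)).eval
            (Fintype.card F : ℤ) := by
  refine natCast_card_pairs_eq_sum_Icc_left (fun L : Submodule F V => finrank F L = l)
    (fun M : Submodule F V => finrank F M = m) (fun L M => L ⊔ L.map φ ≤ M)
    (fun L => finrank F ↥(L ⊓ L.map φ)) _ (fun L hL => hL ▸ Submodule.finrank_mono inf_le_left)
    (fun t ht => by rw [gP_eq_zero_s9 (.inl (by omega)), eval_zero]) fun L hL => ?_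
  have hsup := Submodule.finrank_sup_add_finrank_inf_eq L (L.map φ)
  rw [finrank_map_of_injective hφ, hL] at hsup
  rw [natCast_card_finrank_eq_and_ge]
  congr 2 <;> omega

theorem natCast_card_pairs_sup_map_le_eq_sum_right (hφ : Function.Injective φ) (l m : ℕ) :
    (Nat.card {LM : Submodule F V × Submodule F V //
        finrank F LM.1 = l ∧ finrank F LM.2 = m ∧ LM.1 ⊔ LM.1.map φ ≤ LM.2} : ℤ) =
      ∑ u ∈ Icc l m,
        (Nat.card {M : Submodule F V // finrank F M = m ∧ finrank F ↥(M ⊓ M.map φ) = u} : ℤ) *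
          (gP (u : ℤ) (l : ℤ)).eval (Fintype.card F : ℤ) := by
  refine natCast_card_pairs_eq_sum_Icc_right (fun L : Submodule F V => finrank F L = l)
    (fun M : Submodule F V => finrank F M = m) (fun L M => L ⊔ L.map φ ≤ M)
    (fun M => finrank F ↥(M ⊓ M.map φ)) _ (fun M hM => hM ▸ Submodule.finrank_mono inf_le_left)
    (fun u hu => by rw [gP_eq_zero_s9 (.inr (by omega)), eval_zero]) fun M _ => ?_
  simp only [sup_le_iff, Submodule.map_le_iff_le_comap, ← le_inf_iff]
  rw [natCast_card_finrank_eq_and_le, finrank_inf_comap_eq_inf_map hφ]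

end Semilinear

theorem double_counting_identity_general
    (p : ℕ) [Fact p.Prime] (e : ℕ) (n : ℕ)
    (ν : ℕ) (l d : ℕ) (hdl : d ≤ l)
    (F : Type) [Field F] [Fintype F] [CharP F p] (hF : Fintype.card F = (p ^ e) ^ ν) :
    ((Nat.card {LM : Submodule F (Fin n → F) × Submodule F (Fin n → F) //
        Module.finrank F ↥LM.1 = l ∧ Module.finrank F ↥LM.2 = 2 * l - d ∧
        LM.1 ⊔ frobSub F p e n LM.1 ≤ LM.2} : ℤ) =
      ∑ t ∈ Finset.Icc d l,
        (Nat.card {L : Submodule F (Fin n → F) //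
            Module.finrank F ↥L = l ∧ Module.finrank F ↥(L ⊓ frobSub F p e n L) = t} : ℤ) *
          (gP ((n : ℤ) - 2 * l + t) ((t : ℤ) - d)).eval (((p : ℤ) ^ e) ^ ν)) ∧
    ((Nat.card {LM : Submodule F (Fin n → F) × Submodule F (Fin n → F) //
        Module.finrank F ↥LM.1 = l ∧ Module.finrank F ↥LM.2 = 2 * l - d ∧
        LM.1 ⊔ frobSub F p e n LM.1 ≤ LM.2} : ℤ) =
      ∑ u ∈ Finset.Icc l (2 * l - d),
        (Nat.card {L : Submodule F (Fin n → F) //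
            Module.finrank F ↥L = 2 * l - d ∧
            Module.finrank F ↥(L ⊓ frobSub F p e n L) = u} : ℤ) *
          (gP (u : ℤ) (l : ℤ)).eval (((p : ℤ) ^ e) ^ ν)) := by
  have hφ : Function.Injective (frobLin F p e n) := fun a b h =>
    funext fun i => (frobHom F p e).injective (congrFun h i)
  have hq : (Fintype.card F : ℤ) = ((p : ℤ) ^ e) ^ ν := by exact_mod_cast hF
  refine ⟨(natCast_card_pairs_sup_map_le_eq_sum_left hφ l (2 * l - d)).trans ?_,
    (natCast_card_pairs_sup_map_le_eq_sum_right hφ l (2 * l - d)).trans ?_⟩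
  · rw [show 2 * l - (2 * l - d) = d by omega, finrank_fin_fun, hq]
    refine sum_congr rfl fun t _ => ?_
    rw [show ((2 * l - d : ℕ) : ℤ) - 2 * l + t = t - d by omega]
    rfl
  · rw [hq]
    rfl

/-- **Double-counting identity (equations 2.7 and 2.8).**  For `q = p^e` and
`0 ≤ d ≤ l ≤ n`, the number of pairs `(L,M)` of `F_{q^ν}`-subspaces of `F_{q^ν}^n` with
`dim L = l`, `dim M = 2l − d` and `L + L^q ⊆ M` equals both
`Σ_{t=d}^{l} t_{l,t}·g_{n−2l+t, t−d}(q^ν)` and `Σ_{u=l}^{2l−d} t_{2l−d,u}·g_{u,l}(q^ν)`,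
where `t_{l',d'}` is the number of subspaces `L` with `dim L = l'`, `dim (L ∩ L^q) = d'`. -/
theorem double_counting_identity
    (p : ℕ) [Fact p.Prime] (e : ℕ) (he : 1 ≤ e) (n : ℕ) (hn : 1 ≤ n)
    (ν : ℕ) (hν : 0 < ν) (l d : ℕ) (hdl : d ≤ l) (hln : l ≤ n)
    (F : Type) [Field F] [Fintype F] [CharP F p] (hF : Fintype.card F = (p ^ e) ^ ν) :
    ((Nat.card {LM : Submodule F (Fin n → F) × Submodule F (Fin n → F) //
        Module.finrank F ↥LM.1 = l ∧ Module.finrank F ↥LM.2 = 2 * l - d ∧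
        LM.1 ⊔ frobSub F p e n LM.1 ≤ LM.2} : ℤ) =
      ∑ t ∈ Finset.Icc d l,
        (Nat.card {L : Submodule F (Fin n → F) //
            Module.finrank F ↥L = l ∧ Module.finrank F ↥(L ⊓ frobSub F p e n L) = t} : ℤ) *
          (gP ((n : ℤ) - 2 * l + t) ((t : ℤ) - d)).eval (((p : ℤ) ^ e) ^ ν)) ∧
    ((Nat.card {LM : Submodule F (Fin n → F) × Submodule F (Fin n → F) //
        Module.finrank F ↥LM.1 = l ∧ Module.finrank F ↥LM.2 = 2 * l - d ∧
        LM.1 ⊔ frobSub F p e n LM.1 ≤ LM.2} : ℤ) =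
      ∑ u ∈ Finset.Icc l (2 * l - d),
        (Nat.card {L : Submodule F (Fin n → F) //
            Module.finrank F ↥L = 2 * l - d ∧
            Module.finrank F ↥(L ⊓ frobSub F p e n L) = u} : ℤ) *
          (gP (u : ℤ) (l : ℤ)).eval (((p : ℤ) ^ e) ^ ν)) :=
  double_counting_identity_general p e n ν l d hdl F hF
end

section
/- Lemma 5.2: Let m ≥ 3 be an integer, let R be a commutative ring (e.g. R = ℤ[u,v,t]), and let u, v, t ∈ R. Define the m × m matrix A(m,u,v,t) = (a_{ij})_{1 ≤ i,j ≤ m} by a_{ij} = u if i + j = m; a_{ij} = 1 + uv if i + j = m + 1; a_{ij} = v if i + j = m + 2; a_{mm} = t; and a_{ij} = 0 otherwise. Then det A(m,u,v,t) = (−1)^{⌊m/2⌋}·( Σ_{i=0}^{m} (uv)^i + (−u)^{m−1}·t ). -/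
/-- The `m × m` matrix `A(m,u,v,t)` (indices read `1,…,m`): entry `(i,j)` is `u` if
`i + j = m`, `1 + uv` if `i + j = m + 1`, `v` if `i + j = m + 2`, the `(m,m)` entry is `t`,
and all other entries are `0`. -/
def matA {R : Type*} [CommRing R] (m : ℕ) (u v t : R) : Matrix (Fin m) (Fin m) R :=
  Matrix.of fun i j =>
    if i.1 = m - 1 ∧ j.1 = m - 1 then t
    else if i.1 + j.1 + 2 = m then u
    else if i.1 + j.1 + 2 = m + 1 then 1 + u * v
    else if i.1 + j.1 + 2 = m + 2 then v
    else 0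

/-!
Reversing the columns of `A(m,u,v,t)`, a permutation of sign `(-1)^⌊m/2⌋`, turns it into the
tridiagonal matrix `T` with diagonal `1 + uv`, superdiagonal `u` and subdiagonal `v`, plus `t` in
the bottom-left corner. Expanding along the first row, `D n = det T_n` satisfies
`D (n + 2) = (1 + uv) D (n + 1) - uv D n`, whence `D n = ∑_{i ≤ n} (uv)^i`. The corner adds
`(-1)^(m-1) t` times the minor of `T` without its last row and first column, which is triangular
with diagonal `u`.
-/

open Equiv Finset Matrix

theorem Fin.revPerm_succ_eq_decomposeFin (n : ℕ) :
    (Fin.revPerm : Perm (Fin (n + 1))) =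
      Perm.decomposeFin.symm (0, Fin.revPerm) * finRotate (n + 1) := by
  ext i
  cases i using Fin.lastCases with
  | last => simp
  | cast j => simp [Fin.rev_castSucc]

theorem neg_one_pow_div_two_mul_neg_one_pow {M : Type*} [Monoid M] [HasDistribNeg M] (n : ℕ) :
    (-1 : M) ^ (n / 2) * (-1) ^ n = (-1) ^ ((n + 1) / 2) := by
  rcases Nat.even_or_odd' n with ⟨k, rfl | rfl⟩
  · rw [show (2 * k + 1) / 2 = k by omega, Nat.mul_div_cancel_left k two_pos, pow_mul]
    simp
  · rw [show (2 * k + 1 + 1) / 2 = k + 1 by omega, show (2 * k + 1) / 2 = k by omega, pow_succ,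
      pow_succ, pow_mul]
    simp

theorem Fin.sign_revPerm (n : ℕ) :
    Perm.sign (Fin.revPerm : Perm (Fin n)) = (-1) ^ (n / 2) := by
  induction n with
  | zero => rfl
  | succ n ih =>
    rw [Fin.revPerm_succ_eq_decomposeFin, map_mul, Perm.decomposeFin.symm_sign, sign_finRotate, ih]
    simp [neg_one_pow_div_two_mul_neg_one_pow]

section

variable {R : Type*} [CommRing R]

theorem Matrix.det_add_single {n : ℕ} (M : Matrix (Fin (n + 1)) (Fin (n + 1)) R)
    (i j : Fin (n + 1)) (c : R) :
    (M + single i j c).det =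
      M.det + (-1) ^ (i + j : ℕ) * c * (M.submatrix i.succAbove j.succAbove).det := by
  have hM : M + single i j c = M.updateRow i (M i + c • Pi.single j 1) := by
    ext k l
    by_cases hk : k = i
    · subst hk; simp [single_apply, Pi.single_apply, eq_comm]
    · simp [hk, Ne.symm hk]
  rw [hM, det_updateRow_add, updateRow_eq_self, det_updateRow_smul, ← adjugate_apply,
    adjugate_fin_succ_eq_det_submatrix]
  ring

def tridiag (n : ℕ) (a b c : R) : Matrix (Fin n) (Fin n) R :=
  Matrix.of fun i j =>
    if i.1 = j.1 then a else if j.1 = i.1 + 1 then b else if i.1 = j.1 + 1 then c else 0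

theorem tridiag_submatrix_succ (n : ℕ) (a b c : R) :
    (tridiag (n + 1) a b c).submatrix Fin.succ Fin.succ = tridiag n a b c := by
  ext i j
  simp only [tridiag, submatrix_apply, of_apply, Fin.val_succ]
  split_ifs <;> first | rfl | omega

theorem det_tridiag_succ_succ (n : ℕ) (a b c : R) :
    (tridiag (n + 2) a b c).det =
      a * (tridiag (n + 1) a b c).det - b * c * (tridiag n a b c).det := by
  have hminor : ((tridiag (n + 2) a b c).submatrix Fin.succ (Fin.succAbove 1)).det =
      c * (tridiag n a b c).det := by
    rw [det_succ_column_zero, Fin.sum_univ_succ,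
      Finset.sum_eq_zero fun i _ => by simp [tridiag], submatrix_submatrix, Fin.succAbove_zero]
    have : Fin.succAbove 1 ∘ Fin.succ = (Fin.succ ∘ Fin.succ : Fin n → Fin (n + 2)) := by
      ext; simp
    rw [this, ← submatrix_submatrix, tridiag_submatrix_succ, tridiag_submatrix_succ]
    simp [tridiag]
  rw [det_succ_row_zero, Fin.sum_univ_succ, Fin.sum_univ_succ,
    Finset.sum_eq_zero fun j _ => by simp [tridiag], Fin.succ_zero_eq_one, hminor,
    Fin.succAbove_zero, tridiag_submatrix_succ]
  simp [tridiag]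
  ring

theorem det_tridiag_one_add_mul (n : ℕ) (u v : R) :
    (tridiag n (1 + u * v) u v).det = ∑ i ∈ range (n + 1), (u * v) ^ i := by
  induction n using Nat.twoStepInduction with
  | zero => simp
  | one => simp [tridiag]; ring
  | more n ih₀ ih₁ =>
    rw [det_tridiag_succ_succ, ih₀, ih₁, sum_range_succ _ (n + 2), sum_range_succ _ (n + 1)]
    ring

theorem det_tridiag_submatrix_castSucc_succ (n : ℕ) (a b c : R) :
    ((tridiag (n + 1) a b c).submatrix Fin.castSucc Fin.succ).det = b ^ n := by
  rw [det_of_isLowerTriangular _ fun i j (hij : i < j) => ?_]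
  · simp [tridiag]
  · rw [Fin.lt_def] at hij
    simp only [tridiag, submatrix_apply, of_apply, Fin.val_succ, Fin.val_castSucc]
    split_ifs <;> first | rfl | omega

-- For `m ≤ 2` the corner entry `t` would land on the band of the tridiagonal matrix.
theorem matA_eq_submatrix_revPerm (n : ℕ) (u v t : R) :
    matA (n + 3) u v t =
      (tridiag (n + 3) (1 + u * v) u v + single (Fin.last (n + 2)) 0 t).submatrix id
        Fin.revPerm := by
  ext i j
  simp only [matA, tridiag, single_apply, submatrix_apply, Matrix.add_apply, of_apply, id,
    Fin.revPerm_apply, Fin.val_rev, Fin.ext_iff, Fin.val_last, Fin.val_zero]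
  split_ifs <;> first | omega | simp

end

/-- **Lemma 5.2.**  For `m ≥ 3` and `u, v, t` in a commutative ring,
`det A(m,u,v,t) = (−1)^{⌊m/2⌋}·((Σ_{i=0}^{m} (uv)^i) + (−u)^{m−1}·t)`. -/
theorem det_matA {R : Type*} [CommRing R] (m : ℕ) (hm : 3 ≤ m) (u v t : R) :
    (matA m u v t).det =
      (-1) ^ (m / 2) *
        ((∑ i ∈ Finset.range (m + 1), (u * v) ^ i) + (-u) ^ (m - 1) * t) := by
  obtain ⟨n, rfl⟩ : ∃ n, m = n + 3 := ⟨m - 3, by omega⟩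
  rw [matA_eq_submatrix_revPerm, det_permute', Fin.sign_revPerm, det_add_single,
    det_tridiag_one_add_mul, Fin.succAbove_last, Fin.succAbove_zero,
    det_tridiag_submatrix_castSucc_succ, Fin.val_last, Fin.val_zero, add_zero,
    show n + 3 - 1 = n + 2 from rfl, neg_pow]
  push_cast
  ring
end

section
/- Description of Γ_2 (proof of Theorem 6.1): The F_2-linear code Γ_2 := {(x/4) mod 2 : x ∈ M_𝒞 ∩ 4·ℤ^𝒫} ⊆ F_2^𝒫 ≅ F_2^85 is equal to the even-weight code {c ∈ F_2^𝒫 : Σ_{P∈𝒫} c_P = 0}; in particular Γ_2 has dimension 84 over F_2. -/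
/-- The points of `P^3(F)`: one-dimensional `F`-subspaces of `F^4`. -/
abbrev ProjPts (F : Type) [Field F] := {P : Submodule F (Fin 4 → F) // Module.finrank F ↥P = 1}

instance (F : Type) [Field F] [Finite F] : Finite (Submodule F (Fin 4 → F)) :=
  Finite.of_injective (fun L => (L : Set (Fin 4 → F))) SetLike.coe_injective

noncomputable instance (F : Type) [Field F] [Finite F] : Fintype (ProjPts F) :=
  Fintype.ofFinite _

open scoped Classical in
/-- `v_Λ = Σ_{P ⊆ Λ} e_P ∈ ℤ^𝒫`. -/
noncomputable def vLam (F : Type) [Field F] (Λ : Submodule F (Fin 4 → F)) : ProjPts F → ℤ :=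
  fun P => if P.1 ≤ Λ then 1 else 0

/-- The subgroup `N_Σ ⊆ ℤ^𝒫` generated by the vectors `2^{3−k}(v_Λ − v_{Λ'})`,
for `Λ, Λ'` running over `k`-dimensional subspaces of `F^4` and `k ∈ {1,2,3}`. -/
noncomputable def NSigma (F : Type) [Field F] : Submodule ℤ (ProjPts F → ℤ) :=
  Submodule.span ℤ {w | ∃ k : ℕ, 1 ≤ k ∧ k ≤ 3 ∧ ∃ Λ Λ' : Submodule F (Fin 4 → F),
    Module.finrank F ↥Λ = k ∧ Module.finrank F ↥Λ' = k ∧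
    w = (2 : ℤ) ^ (3 - k) • (vLam F Λ - vLam F Λ')}

/-- `M_𝒞 = N_Σ + 8·ℤ^𝒫`. -/
noncomputable def MCal (F : Type) [Field F] : Submodule ℤ (ProjPts F → ℤ) :=
  NSigma F ⊔ LinearMap.range ((8 : ℤ) • (LinearMap.id : (ProjPts F → ℤ) →ₗ[ℤ] (ProjPts F → ℤ)))

/-- The bilinear form `B(x,y) = (1/4)·Σ_P x_P y_P`. -/
noncomputable def BF (F : Type) [Field F] [Finite F] (x y : ProjPts F → ℤ) : ℚ :=
  (∑ P, (x P : ℚ) * y P) / 4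

/-- Coordinatewise reduction modulo 2, `ℤ^𝒫 → F_2^𝒫`. -/
noncomputable def redMod2 (F : Type) [Field F] : (ProjPts F → ℤ) →ₗ[ℤ] (ProjPts F → ZMod 2) where
  toFun x := fun P => (x P : ZMod 2)
  map_add' x y := funext fun P => by push_cast [Pi.add_apply]; ring
  map_smul' c x := funext fun P => by simp [Pi.smul_apply, zsmul_eq_mul]

/-- The Hamming weight of a word in `F_2^𝒫`: the number of nonzero coordinates. -/
noncomputable def wtF (F : Type) [Field F] (ω : ProjPts F → ZMod 2) : ℕ :=
  Nat.card {P : ProjPts F // ω P ≠ 0}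

/-! The coordinate sum maps `M_𝒞` into `8ℤ`, because any two `k`-dimensional subspaces contain
the same number `1 + q + ⋯ + q^(k-1)` of points; so `4x ∈ M_𝒞` forces `∑ x_P` to be even.
Conversely, for points `P, P₀` the vectors `4(e_P - e_{P₀})` are generators of `N_Σ` (`k = 1`), and
`4x = ∑ x_P • 4(e_P - e_{P₀}) + 8 (∑ x_P / 2) e_{P₀}` whenever `∑ x_P` is even. Hence `Γ₂` is the
kernel of the coordinate sum on `F_2^85`, which has dimension `84`. -/

open Finset
open scoped LinearAlgebra.Projectivization

section CoordSum

variable (R ι : Type*) [CommSemiring R] [Fintype ι]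

def coordSum : (ι → R) →ₗ[R] R where
  toFun x := ∑ i, x i
  map_add' x y := sum_add_distrib
  map_smul' a x := by simp [mul_sum]

variable {R ι}

@[simp]
theorem coordSum_apply (x : ι → R) : coordSum R ι x = ∑ i, x i := rfl

theorem coordSum_surjective [Nonempty ι] : Function.Surjective (coordSum R ι) := by
  classical
  intro a
  exact ⟨Pi.single (Classical.arbitrary ι) a, by simp⟩

theorem card_ker_coordSum (K : Type*) [Field K] [Fintype K] [Nonempty ι] :
    Nat.card (LinearMap.ker (coordSum K ι)) = Fintype.card K ^ (Fintype.card ι - 1) := by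
  classical
  have hrank := LinearMap.finrank_range_add_finrank_ker (coordSum K ι)
  rw [LinearMap.range_eq_top.mpr coordSum_surjective, finrank_top, Module.finrank_self,
    Module.finrank_fintype_fun_eq_card] at hrank
  rw [Nat.card_eq_fintype_card, Module.card_eq_pow_finrank (K := K), ← hrank,
    Nat.add_sub_cancel_left]

end CoordSum

namespace ProjPts

variable {F : Type} [Field F]

theorem le_iff_eq {P Q : ProjPts F} : Q.1 ≤ P.1 ↔ Q = P :=
  ⟨fun h => Subtype.ext (Submodule.eq_of_le_of_finrank_eq h (Q.2.trans P.2.symm)),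
    fun h => h ▸ le_rfl⟩

noncomputable def belowEquiv (Λ : Submodule F (Fin 4 → F)) :
    {P : ProjPts F // P.1 ≤ Λ} ≃ ℙ F Λ :=
  calc {P : ProjPts F // P.1 ≤ Λ}
      ≃ {H : {H : Submodule F (Fin 4 → F) // H ≤ Λ} // Module.finrank F H.1 = 1} :=
        (Equiv.subtypeSubtypeEquivSubtypeInter
            (fun H : Submodule F (Fin 4 → F) => Module.finrank F H = 1) (· ≤ Λ)).trans
          ((Equiv.subtypeEquivRight fun _ => and_comm).trans
            (Equiv.subtypeSubtypeEquivSubtypeInter _ _).symm)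
    _ ≃ {H : Submodule F Λ // Module.finrank F H = 1} :=
        ((Submodule.MapSubtype.orderIso Λ).toEquiv.subtypeEquiv fun H => by
          rw [← Submodule.finrank_map_subtype_eq Λ H]; rfl).symm
    _ ≃ ℙ F Λ := (Projectivization.equivSubmodule F Λ).symm

theorem card_below [Finite F] (Λ : Submodule F (Fin 4 → F)) :
    Nat.card {P : ProjPts F // P.1 ≤ Λ} = ∑ i ∈ range (Module.finrank F Λ), Nat.card F ^ i := by
  rw [Nat.card_congr (belowEquiv Λ), Projectivization.card_of_finrank F Λ rfl]

theorem card [Finite F] : Nat.card (ProjPts F) = ∑ i ∈ range 4, Nat.card F ^ i := by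
  rw [← Nat.card_congr (Equiv.subtypeUnivEquiv fun P : ProjPts F => le_top (a := P.1)), card_below,
    finrank_top, Module.finrank_fin_fun]

instance [Finite F] : Nonempty (ProjPts F) :=
  (Nat.card_pos_iff.mp (by rw [card, sum_range_succ']; simp)).1

end ProjPts

section Gamma2

variable {F : Type} [Field F]

open scoped Classical in
theorem vLam_point (P : ProjPts F) : vLam F P.1 = Pi.single P 1 := by
  funext Q
  simp only [vLam, Pi.single_apply, ProjPts.le_iff_eq]

variable [Finite F]

theorem eq_sum_smul_vLam_sub_add (x : ProjPts F → ℤ) (P₀ : ProjPts F) :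
    x = ∑ P, x P • (vLam F P.1 - vLam F P₀.1) + (∑ P, x P) • vLam F P₀.1 := by
  classical
  funext Q
  simp [vLam_point, Pi.single_apply, mul_sub, sum_sub_distrib, sum_mul]

theorem sum_vLam (Λ : Submodule F (Fin 4 → F)) :
    ∑ P, vLam F Λ P = Nat.card {P : ProjPts F // P.1 ≤ Λ} := by
  classical
  simp [vLam, sum_boole, Nat.card_eq_fintype_card, Fintype.card_subtype]

theorem sum_vLam_eq_of_finrank_eq {Λ Λ' : Submodule F (Fin 4 → F)}
    (h : Module.finrank F Λ = Module.finrank F Λ') : ∑ P, vLam F Λ P = ∑ P, vLam F Λ' P := by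
  rw [sum_vLam, sum_vLam, ProjPts.card_below, ProjPts.card_below, h]

theorem eight_dvd_sum_of_mem_MCal {m : ProjPts F → ℤ} (hm : m ∈ MCal F) : 8 ∣ ∑ P, m P := by
  suffices MCal F ≤ Submodule.comap (coordSum ℤ (ProjPts F)) (Ideal.span {(8 : ℤ)}) by
    simpa [Ideal.mem_span_singleton] using this hm
  refine sup_le ((Submodule.span_le).mpr ?_) ?_
  · rintro _ ⟨k, -, -, Λ, Λ', hΛ, hΛ', rfl⟩
    rw [SetLike.mem_coe, Submodule.mem_comap, map_smul, map_sub, coordSum_apply, coordSum_apply,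
      sum_vLam_eq_of_finrank_eq (hΛ.trans hΛ'.symm), sub_self, smul_zero]
    exact zero_mem _
  · rintro _ ⟨y, rfl⟩
    simp [Ideal.mem_span_singleton, ← mul_sum]

theorem four_smul_mem_MCal_of_even_sum {x : ProjPts F → ℤ} (hx : Even (∑ P, x P)) :
    (4 : ℤ) • x ∈ MCal F := by
  obtain ⟨t, ht⟩ := hx
  obtain ⟨P₀⟩ : Nonempty (ProjPts F) := inferInstance
  have hdecomp : (4 : ℤ) • x = ∑ P, x P • ((2 : ℤ) ^ (3 - 1) • (vLam F P.1 - vLam F P₀.1))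
      + (8 : ℤ) • (t • vLam F P₀.1) := by
    conv_lhs => rw [eq_sum_smul_vLam_sub_add x P₀, ht]
    rw [smul_add, smul_sum]
    congr 1
    · exact sum_congr rfl fun P _ => by module
    · module
  rw [hdecomp]
  refine add_mem (Submodule.mem_sup_left (sum_mem fun P _ => Submodule.smul_mem _ _
    (Submodule.subset_span ⟨1, le_rfl, by norm_num, P.1, P₀.1, P.2, P₀.2, rfl⟩)))
    (Submodule.mem_sup_right ⟨t • vLam F P₀.1, rfl⟩)

theorem sum_redMod2 (x : ProjPts F → ℤ) : ∑ P, redMod2 F x P = ((∑ P, x P : ℤ) : ZMod 2) := by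
  simp [redMod2]

variable (F) in
noncomputable def Gamma2 : Submodule ℤ (ProjPts F → ZMod 2) :=
  ((MCal F).comap ((4 : ℤ) • LinearMap.id)).map (redMod2 F)

theorem mem_Gamma2_iff {c : ProjPts F → ZMod 2} : c ∈ Gamma2 F ↔ ∑ P, c P = 0 := by
  constructor
  · rintro ⟨x, hx, rfl⟩
    obtain ⟨u, hu⟩ := eight_dvd_sum_of_mem_MCal hx
    simp only [LinearMap.smul_apply, LinearMap.id_apply, Pi.smul_apply, smul_eq_mul,
      ← mul_sum] at hu
    rw [sum_redMod2, ZMod.intCast_eq_zero_iff_even]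
    exact ⟨u, by linarith⟩
  · intro hc
    have hlift : redMod2 F (fun P => ((c P).val : ℤ)) = c := by
      funext P
      simp [redMod2]
    refine ⟨_, four_smul_mem_MCal_of_even_sum (x := fun P => ((c P).val : ℤ)) ?_, hlift⟩
    rw [← ZMod.intCast_eq_zero_iff_even, ← sum_redMod2, hlift, hc]

end Gamma2

/-- **Description of `Γ_2`** (proof of Theorem 6.1).  The binary code
`Γ_2 = {(x/4) mod 2 : x ∈ M_𝒞 ∩ 4ℤ^𝒫} ⊆ F_2^85` is exactly the even-weight code
`{c : Σ_P c_P = 0}`; in particular it has `2^84` elements (dimension `84`). -/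
theorem Gamma2_description (F : Type) [Field F] [Fintype F] (hF : Fintype.card F = 4) :
    (∀ c : ProjPts F → ZMod 2,
      c ∈ ((MCal F).comap
          ((4 : ℤ) • (LinearMap.id : (ProjPts F → ℤ) →ₗ[ℤ] (ProjPts F → ℤ)))).map
        (redMod2 F) ↔ ∑ P, c P = 0) ∧
    Nat.card ↥(((MCal F).comap
        ((4 : ℤ) • (LinearMap.id : (ProjPts F → ℤ) →ₗ[ℤ] (ProjPts F → ℤ)))).map
      (redMod2 F)) = 2 ^ 84 := by
  have hmem : ∀ c, c ∈ Gamma2 F ↔ ∑ P, c P = 0 := fun c => mem_Gamma2_iff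
  have hcard : Fintype.card (ProjPts F) = 85 := by
    rw [Fintype.card_eq_nat_card, ProjPts.card, Nat.card_eq_fintype_card, hF]
    rfl
  refine ⟨hmem, ?_⟩
  calc Nat.card (Gamma2 F)
      = Nat.card (LinearMap.ker (coordSum (ZMod 2) (ProjPts F))) :=
        Nat.card_congr (Equiv.subtypeEquivRight hmem)
    _ = 2 ^ 84 := by rw [card_ker_coordSum, ZMod.card, hcard]
end
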